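/- (Lemma 1.) Let K ≥ 1, let C be a K×K Hermitian positive semidefinite complex matrix, h ∈ ℂ^K, ε > 0, and t ∈ ℝ. Then the robust constraint 'for every η ∈ ℂ^K with ‖η‖ ≤ ε, (h + η)† C (h + η) ≥ t' holds if and only if there exists a real μ ≥ 0 such that the (K+1)×(K+1) Hermitian block matrix T(C, t, μ) = fromBlocks( μ·I_K + C , C h , (C h)† , h† C h − t − μ·ε² ) is positive semidefinite. -/

import Mathlib

open Matrix Complex ComplexOrder

/-!
Write `f x = (h + x)† C (h + x)`. Since `C ⪰ 0`, `f` is a convex quadratic, so it attains its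
minimum over the compact ball `‖x‖ ≤ ε` at some `x₀`, where first-order optimality reduces to the
minimality of the linear form `Re ⟪C (h + x₀), ·⟫` over the ball. This forces the KKT conditions
`C (h + x₀) = -μ x₀` with `μ ≥ 0` and `μ = 0 ∨ ‖x₀‖ = ε`; by convexity `x₀` then minimises the
Lagrangian `f x + μ ‖x‖²` globally, i.e. `t + μ ε² ≤ f x + μ ‖x‖²` for all `x`. Evaluating the
quadratic form of `T(C, t, μ)` at `(c x, c)` gives `|c|²` times this inhomogeneous inequality, so it
is equivalent to `T(C, t, μ) ⪰ 0`; the converse direction is immediate.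
-/

section LagrangeMultiplier

open RCLike Metric Filter Topology

variable {𝕜 E : Type*} [RCLike 𝕜] [NormedAddCommGroup E] [InnerProductSpace 𝕜 E]

local notation "⟪" x ", " y "⟫" => inner 𝕜 x y

theorem LinearMap.IsSymmetric.re_inner_add_map_add {T : E →ₗ[𝕜] E} (hT : T.IsSymmetric)
    (u y : E) :
    re ⟪u + y, T (u + y)⟫ = re ⟪u, T u⟫ + 2 * re ⟪T u, y⟫ + re ⟪y, T y⟫ := by
  have hsymm : re ⟪y, T u⟫ = re ⟪T u, y⟫ := inner_re_symm _ _
  rw [map_add, inner_add_left, inner_add_right, inner_add_right, ← hT u y]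
  simp only [map_add, hsymm]
  ring

theorem add_ofReal_smul_sub_mem_closedBall {x y : E} {ε r : ℝ} (hx : x ∈ closedBall (0 : E) ε)
    (hy : y ∈ closedBall (0 : E) ε) (hr₀ : 0 ≤ r) (hr₁ : r ≤ 1) :
    x + (r : 𝕜) • (y - x) ∈ closedBall (0 : E) ε := by
  rw [mem_closedBall_zero_iff] at *
  have hsplit : x + (r : 𝕜) • (y - x) = ((1 - r : ℝ) : 𝕜) • x + (r : 𝕜) • y := by
    push_cast
    rw [sub_smul, one_smul, smul_sub]
    abel
  calc ‖x + (r : 𝕜) • (y - x)‖ ≤ (1 - r) * ‖x‖ + r * ‖y‖ := by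
        rw [hsplit]
        refine (norm_add_le _ _).trans_eq ?_
        rw [norm_smul, norm_smul, norm_ofReal, norm_ofReal, abs_of_nonneg hr₀,
          abs_of_nonneg (sub_nonneg.2 hr₁)]
    _ ≤ (1 - r) * ε + r * ε := by gcongr
    _ = ε := by ring

theorem isMinOn_re_inner_of_isMinOn_re_inner_map {T : E →ₗ[𝕜] E} (hT : T.IsSymmetric)
    {a x₀ : E} {ε : ℝ} (hx₀ : x₀ ∈ closedBall (0 : E) ε)
    (hmin : IsMinOn (fun x ↦ re ⟪a + x, T (a + x)⟫) (closedBall 0 ε) x₀) :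
    IsMinOn (fun y ↦ re ⟪T (a + x₀), y⟫) (closedBall 0 ε) x₀ := by
  intro y hy
  set d := y - x₀
  have hsegment : ∀ r ∈ Set.Ioc (0 : ℝ) 1, 0 ≤ 2 * re ⟪T (a + x₀), d⟫ + r * re ⟪d, T d⟫ := by
    rintro r ⟨hr₀, hr₁⟩
    have hle := isMinOn_iff.1 hmin _ (add_ofReal_smul_sub_mem_closedBall (𝕜 := 𝕜) hx₀ hy hr₀.le hr₁)
    rw [← add_assoc, hT.re_inner_add_map_add (a + x₀)] at hle
    simp only [map_smul, inner_smul_real_left, inner_smul_real_right, RCLike.smul_re] at hle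
    have : 0 ≤ r * (2 * re ⟪T (a + x₀), d⟫ + r * re ⟪d, T d⟫) := by linarith
    exact (mul_nonneg_iff_of_pos_left hr₀).1 this
  have hlim : Tendsto (fun r : ℝ ↦ 2 * re ⟪T (a + x₀), d⟫ + r * re ⟪d, T d⟫) (𝓝[>] 0)
      (𝓝 (2 * re ⟪T (a + x₀), d⟫)) := by
    refine tendsto_nhdsWithin_of_tendsto_nhds ?_
    have hcont : Continuous fun r : ℝ ↦ 2 * re ⟪T (a + x₀), d⟫ + r * re ⟪d, T d⟫ := by fun_prop
    simpa using hcont.tendsto 0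
  have hd : 0 ≤ 2 * re ⟪T (a + x₀), d⟫ :=
    ge_of_tendsto hlim (eventually_of_mem (Ioc_mem_nhdsGT one_pos) hsegment)
  rw [inner_sub_right, map_sub] at hd
  simp only [Set.mem_ofPred_eq]
  linarith

theorem exists_eq_neg_smul_of_isMinOn_re_inner {v x₀ : E} {ε : ℝ} (hε : 0 < ε)
    (hx₀ : x₀ ∈ closedBall (0 : E) ε) (hmin : IsMinOn (fun y ↦ re ⟪v, y⟫) (closedBall 0 ε) x₀) :
    ∃ μ : ℝ, 0 ≤ μ ∧ v = -((μ : 𝕜) • x₀) ∧ (μ = 0 ∨ ‖x₀‖ = ε) := by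
  rcases eq_or_ne v 0 with rfl | hv
  · exact ⟨0, le_rfl, by simp, Or.inl rfl⟩
  have hv' : 0 < ‖v‖ := norm_pos_iff.2 hv
  rw [mem_closedBall_zero_iff] at hx₀
  have hupper : re ⟪v, x₀⟫ ≤ -(ε * ‖v‖) := by
    have hmem : -(((ε / ‖v‖ : ℝ) : 𝕜) • v) ∈ closedBall (0 : E) ε := by
      rw [mem_closedBall_zero_iff, norm_neg, norm_smul, norm_ofReal, abs_of_pos (by positivity),
        div_mul_cancel₀ _ hv'.ne']
    have hle := isMinOn_iff.1 hmin _ hmem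
    rw [inner_neg_right, map_neg, inner_smul_real_right, RCLike.smul_re,
      inner_self_eq_norm_sq] at hle
    exact hle.trans_eq (by field_simp)
  have hlower : -(‖v‖ * ‖x₀‖) ≤ re ⟪v, x₀⟫ := by
    have := re_inner_le_norm (𝕜 := 𝕜) (-v) x₀
    rw [inner_neg_left, map_neg, norm_neg] at this
    linarith
  have hnorm : ‖x₀‖ = ε := le_antisymm hx₀ (le_of_mul_le_mul_left (by linarith) hv')
  set μ := ‖v‖ / ε
  have hμε : μ * ε = ‖v‖ := div_mul_cancel₀ _ hε.ne'
  have hzero : ‖v + (μ : 𝕜) • x₀‖ ^ 2 ≤ 0 := by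
    have := mul_le_mul_of_nonneg_left hupper (by positivity : 0 ≤ μ)
    rw [norm_add_sq (𝕜 := 𝕜), inner_smul_real_right, RCLike.smul_re, norm_smul, norm_ofReal,
      abs_of_nonneg (by positivity), hnorm]
    nlinarith
  refine ⟨μ, by positivity, eq_neg_of_add_eq_zero_left ?_, Or.inr hnorm⟩
  exact norm_eq_zero.1 (pow_eq_zero_iff two_ne_zero |>.1 (le_antisymm hzero (sq_nonneg _)))

theorem LinearMap.IsPositive.exists_lagrange_multiplier_closedBall [FiniteDimensional 𝕜 E]
    {T : E →ₗ[𝕜] E} (hT : T.IsPositive) (a : E) {ε : ℝ} (hε : 0 < ε) {t : ℝ}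
    (H : ∀ x ∈ closedBall (0 : E) ε, t ≤ re ⟪a + x, T (a + x)⟫) :
    ∃ μ : ℝ, 0 ≤ μ ∧ ∀ x, t + μ * ε ^ 2 ≤ re ⟪a + x, T (a + x)⟫ + μ * ‖x‖ ^ 2 := by
  have := FiniteDimensional.proper_rclike 𝕜 E
  have hcont : Continuous fun x ↦ re ⟪a + x, T (a + x)⟫ := by
    have := T.continuous_of_finiteDimensional
    fun_prop
  obtain ⟨x₀, hx₀, hmin⟩ := (isCompact_closedBall (0 : E) ε).exists_isMinOn
    (nonempty_closedBall.2 hε.le) hcont.continuousOn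
  obtain ⟨μ, hμ, hgrad, hslack⟩ := exists_eq_neg_smul_of_isMinOn_re_inner hε hx₀
    (isMinOn_re_inner_of_isMinOn_re_inner_map hT.isSymmetric hx₀ hmin)
  refine ⟨μ, hμ, fun x ↦ ?_⟩
  have hquad := hT.isSymmetric.re_inner_add_map_add (a + x₀) (x - x₀)
  have hnorm := norm_add_sq (𝕜 := 𝕜) x₀ (x - x₀)
  rw [add_assoc, add_sub_cancel] at hquad
  rw [add_sub_cancel] at hnorm
  have hgrad' : re ⟪T (a + x₀), x - x₀⟫ = -(μ * re ⟪x₀, x - x₀⟫) := by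
    rw [hgrad, inner_neg_left, inner_smul_real_left, map_neg, RCLike.smul_re]
  have hslack' : μ * ‖x₀‖ ^ 2 = μ * ε ^ 2 := by rcases hslack with rfl | hx₀' <;> simp [*]
  nlinarith [H x₀ hx₀, hT.re_inner_nonneg_right (x - x₀), mul_nonneg hμ (sq_nonneg ‖x - x₀‖)]

end LagrangeMultiplier

section MatrixQuadraticForms

variable {n : Type*} [Fintype n]

theorem Matrix.star_sumElim_dotProduct_fromBlocks_mulVec {R : Type*} [CommRing R] [StarRing R]
    (A : Matrix n n R) (b : n → R) (d : R) (x : n → R) (y : Fin 1 → R) :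
    star (Sum.elim x y) ⬝ᵥ (fromBlocks A (replicateCol (Fin 1) b) (replicateRow (Fin 1) (star b))
      (of fun _ _ ↦ d) *ᵥ Sum.elim x y) =
      star x ⬝ᵥ (A *ᵥ x) + y 0 * (star x ⬝ᵥ b) + star (y 0) * (star b ⬝ᵥ x) +
        star (y 0) * y 0 * d := by
  have hcol : replicateCol (Fin 1) b *ᵥ y = y 0 • b := by
    ext i
    simp [mulVec, dotProduct, mul_comm]
  have hconst : ((of fun _ _ ↦ d : Matrix (Fin 1) (Fin 1) R) *ᵥ y) 0 = d * y 0 := by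
    simp [mulVec, dotProduct]
  have hfin (w : Fin 1 → R) : star y ⬝ᵥ w = star (y 0) * w 0 := by simp [dotProduct]
  rw [fromBlocks_mulVec, Function.star_sumElim, sumElim_dotProduct_sumElim,
    Sum.elim_comp_inl, Sum.elim_comp_inr, hcol, hfin]
  simp only [dotProduct_add, dotProduct_smul, smul_eq_mul, Pi.add_apply,
    replicateRow_mulVec_eq_const, Function.const_apply, hconst]
  ring

theorem Matrix.posSemidef_fromBlocks_iff_forall_nonneg {A : Matrix n n ℂ} (hA : A.PosSemidef)
    (b : n → ℂ) (d : ℂ) :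
    (fromBlocks A (replicateCol (Fin 1) b) (replicateRow (Fin 1) (star b))
      (of fun _ _ ↦ d)).PosSemidef ↔
      ∀ x : n → ℂ, 0 ≤ star x ⬝ᵥ (A *ᵥ x) + star x ⬝ᵥ b + star b ⬝ᵥ x + d := by
  constructor
  · intro hM x
    simpa [star_sumElim_dotProduct_fromBlocks_mulVec] using
      hM.dotProduct_mulVec_nonneg (Sum.elim x fun _ ↦ 1)
  intro H
  have hd : star d = d := (IsSelfAdjoint.of_nonneg (by simpa using H 0)).star_eq
  refine .of_dotProduct_mulVec_nonneg ?_ fun v ↦ ?_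
  · refine isHermitian_fromBlocks_iff.2 ⟨hA.1, conjTranspose_replicateCol _, ?_, ?_⟩
    · rw [conjTranspose_replicateRow, star_star]
    · ext
      simp [hd]
  rw [← Sum.elim_comp_inl_inr v, star_sumElim_dotProduct_fromBlocks_mulVec]
  set x := v ∘ Sum.inl
  set c := (v ∘ Sum.inr) 0
  rcases eq_or_ne c 0 with hc | hc
  · simpa [hc] using hA.dotProduct_mulVec_nonneg x
  have hscale : star x ⬝ᵥ (A *ᵥ x) + c * (star x ⬝ᵥ b) + star c * (star b ⬝ᵥ x) + star c * c * d =
      star c * c * (star (c⁻¹ • x) ⬝ᵥ (A *ᵥ (c⁻¹ • x)) + star (c⁻¹ • x) ⬝ᵥ b +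
        star b ⬝ᵥ (c⁻¹ • x) + d) := by
    have hc' : star c ≠ 0 := star_ne_zero.2 hc
    simp only [star_smul, star_inv₀, smul_dotProduct, dotProduct_smul, mulVec_smul, smul_eq_mul]
    field_simp
  rw [hscale]
  exact mul_nonneg (star_mul_self_nonneg c) (H _)

theorem Matrix.IsHermitian.star_add_dotProduct_mulVec_add {R : Type*} [CommRing R] [StarRing R]
    {C : Matrix n n R} (hC : C.IsHermitian) (h x : n → R) :
    star (h + x) ⬝ᵥ (C *ᵥ (h + x)) =
      star h ⬝ᵥ (C *ᵥ h) + star x ⬝ᵥ (C *ᵥ h) + star (C *ᵥ h) ⬝ᵥ x + star x ⬝ᵥ (C *ᵥ x) := by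
  rw [star_mulVec, hC.eq, ← dotProduct_mulVec, star_add, mulVec_add, add_dotProduct,
    dotProduct_add, dotProduct_add]
  abel

theorem Matrix.star_dotProduct_self_eq_sum_norm_sq (x : n → ℂ) :
    star x ⬝ᵥ x = ((∑ i, ‖x i‖ ^ 2 : ℝ) : ℂ) := by
  push_cast
  simp [dotProduct, Complex.conj_mul']

variable [DecidableEq n]

theorem Matrix.inner_toLp_toEuclideanLin {𝕜 : Type*} [RCLike 𝕜] (M : Matrix n n 𝕜) (u : n → 𝕜) :
    inner 𝕜 (WithLp.toLp 2 u) (M.toEuclideanLin (WithLp.toLp 2 u)) = star u ⬝ᵥ (M *ᵥ u) := by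
  rw [toLpLin_toLp, EuclideanSpace.inner_toLp_toLp, dotProduct_comm, toLin'_apply]

end MatrixQuadraticForms

section RobustConstraint

variable {n : Type*} [Fintype n] [DecidableEq n]

/-- The matrix `T(C, t, μ)` of the paper. -/
def robustEnergyLMI (C : Matrix n n ℂ) (h : n → ℂ) (ε t μ : ℝ) : Matrix (n ⊕ Fin 1) (n ⊕ Fin 1) ℂ :=
  fromBlocks ((μ : ℂ) • 1 + C) (replicateCol (Fin 1) (C *ᵥ h))
    (replicateRow (Fin 1) (star (C *ᵥ h)))
    (of fun _ _ ↦ star h ⬝ᵥ (C *ᵥ h) - (t : ℂ) - ((μ * ε ^ 2 : ℝ) : ℂ))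

theorem posSemidef_robustEnergyLMI_iff {C : Matrix n n ℂ} (hC : C.PosSemidef) (h : n → ℂ)
    (ε t : ℝ) {μ : ℝ} (hμ : 0 ≤ μ) :
    (robustEnergyLMI C h ε t μ).PosSemidef ↔
      ∀ x : n → ℂ, t + μ * ε ^ 2 ≤ (star (h + x) ⬝ᵥ (C *ᵥ (h + x))).re + μ * ∑ i, ‖x i‖ ^ 2 := by
  have hA : ((μ : ℂ) • 1 + C).PosSemidef :=
    (PosSemidef.one.smul (Complex.zero_le_real.2 hμ)).add hC
  rw [robustEnergyLMI, posSemidef_fromBlocks_iff_forall_nonneg hA]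
  refine forall_congr' fun x ↦ ?_
  have hreal : (((star (h + x) ⬝ᵥ (C *ᵥ (h + x))).re : ℝ) : ℂ) = star (h + x) ⬝ᵥ (C *ᵥ (h + x)) :=
    Complex.ext rfl (by simpa using (hC.1.im_star_dotProduct_mulVec_self (h + x)).symm)
  have hform : star x ⬝ᵥ (((μ : ℂ) • 1 + C) *ᵥ x) + star x ⬝ᵥ (C *ᵥ h) + star (C *ᵥ h) ⬝ᵥ x +
      (star h ⬝ᵥ (C *ᵥ h) - t - ((μ * ε ^ 2 : ℝ) : ℂ)) =
      (((star (h + x) ⬝ᵥ (C *ᵥ (h + x))).re + μ * ∑ i, ‖x i‖ ^ 2 - (t + μ * ε ^ 2) : ℝ) : ℂ) := by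
    rw [add_mulVec, smul_mulVec, one_mulVec, dotProduct_add, dotProduct_smul, smul_eq_mul,
      star_dotProduct_self_eq_sum_norm_sq]
    push_cast
    rw [hreal, hC.1.star_add_dotProduct_mulVec_add]
    ring
  rw [hform, Complex.zero_le_real, sub_nonneg]

end RobustConstraint

theorem robust_energy_constraint_iff_lmi_general
    (K : ℕ)
    (C : Matrix (Fin K) (Fin K) ℂ) (hC : C.PosSemidef)
    (h : Fin K → ℂ) (ε : ℝ) (hε : 0 < ε) (t : ℝ) :
    (∀ η : Fin K → ℂ, Real.sqrt (∑ i, ‖η i‖ ^ 2) ≤ ε →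
        t ≤ (star (h + η) ⬝ᵥ (C *ᵥ (h + η))).re) ↔
      ∃ μ : ℝ, 0 ≤ μ ∧
        (Matrix.fromBlocks
          ((μ : ℂ) • (1 : Matrix (Fin K) (Fin K) ℂ) + C)
          (Matrix.replicateCol (Fin 1) (C *ᵥ h))
          (Matrix.replicateRow (Fin 1) (star (C *ᵥ h)))
          (Matrix.of fun _ _ : Fin 1 =>
            star h ⬝ᵥ (C *ᵥ h) - (t : ℂ) - ((μ * ε ^ 2 : ℝ) : ℂ))).PosSemidef := by
  have hF (x : Fin K → ℂ) : RCLike.re (inner ℂ (WithLp.toLp 2 h + WithLp.toLp 2 x)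
      (C.toEuclideanLin (WithLp.toLp 2 h + WithLp.toLp 2 x))) =
      (star (h + x) ⬝ᵥ (C *ᵥ (h + x))).re := by
    rw [← WithLp.toLp_add, inner_toLp_toEuclideanLin, RCLike.re_to_complex]
  constructor
  · intro H
    obtain ⟨μ, hμ, hL⟩ := (isPositive_toEuclideanLin_iff.2 hC).exists_lagrange_multiplier_closedBall
      (WithLp.toLp 2 h) hε (t := t) fun x hx ↦ by
        rw [← WithLp.toLp_ofLp (p := 2) x, hF]
        exact H _ (by rwa [mem_closedBall_zero_iff, EuclideanSpace.norm_eq] at hx)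
    refine ⟨μ, hμ, (posSemidef_robustEnergyLMI_iff hC h ε t hμ).2 fun x ↦ ?_⟩
    have hLx := hL (WithLp.toLp 2 x)
    rwa [hF, EuclideanSpace.norm_sq_eq] at hLx
  · rintro ⟨μ, hμ, hLMI⟩ η hη
    have hL := (posSemidef_robustEnergyLMI_iff hC h ε t hμ).1 hLMI η
    have hη' : ∑ i, ‖η i‖ ^ 2 ≤ ε ^ 2 := (Real.sqrt_le_left hε.le).1 hη
    nlinarith [mul_le_mul_of_nonneg_left hη' hμ]

/-- Lemma 1 of the paper: for a Hermitian positive semidefinite transmit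
covariance `C`, estimated channel `h`, error bound `ε > 0` and level `t`, the
robust constraint `∀ η, ‖η‖ ≤ ε → (h + η)† C (h + η) ≥ t` holds iff there is a
real `μ ≥ 0` such that the block matrix
`T(C, t, μ) = fromBlocks (μ I + C) (C h) ((C h)†) (h† C h − t − μ ε²)` is
positive semidefinite. -/
theorem robust_energy_constraint_iff_lmi
    (K : ℕ) (hK : 1 ≤ K)
    (C : Matrix (Fin K) (Fin K) ℂ) (hC : C.PosSemidef)
    (h : Fin K → ℂ) (ε : ℝ) (hε : 0 < ε) (t : ℝ) :
    (∀ η : Fin K → ℂ, Real.sqrt (∑ i, ‖η i‖ ^ 2) ≤ ε →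
        t ≤ (star (h + η) ⬝ᵥ (C *ᵥ (h + η))).re) ↔
      ∃ μ : ℝ, 0 ≤ μ ∧
        (Matrix.fromBlocks
          ((μ : ℂ) • (1 : Matrix (Fin K) (Fin K) ℂ) + C)
          (Matrix.replicateCol (Fin 1) (C *ᵥ h))
          (Matrix.replicateRow (Fin 1) (star (C *ᵥ h)))
          (Matrix.of fun _ _ : Fin 1 =>
            star h ⬝ᵥ (C *ᵥ h) - (t : ℂ) - ((μ * ε ^ 2 : ℝ) : ℂ))).PosSemidef :=
  robust_energy_constraint_iff_lmi_general K C hC h ε hε t
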